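/- arXiv:1304.1315 — 3 statements merged into one kernel-verified Lean document; each statement's English description precedes it below -/
import Mathlib

section
/- Let k be even and let G=(V,E) and G'=(V',E') be two k-uniform hypergraphs with Laplacian tensors L and L' respectively. If V⊆V' and E⊆E', then λ(L) ≤ λ(L'). -/
open Finset

variable {α : Type*} [DecidableEq α]

/-- The degree of a vertex `i`: the number of edges containing `i`. -/
def hdeg (E : Finset (Finset α)) (i : α) : ℕ := (E.filter (fun e => i ∈ e)).card

/-- The action of the Laplacian tensor: `(L x^{k-1})_i`. -/
def lapAct (k : ℕ) (E : Finset (Finset α)) (x : α → ℝ) (i : α) : ℝ :=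
  (hdeg E i : ℝ) * x i ^ (k - 1) - ∑ e ∈ E.filter (fun e => i ∈ e), ∏ j ∈ e.erase i, x j

/-- The action of the signless Laplacian tensor: `(Q x^{k-1})_i`. -/
def signAct (k : ℕ) (E : Finset (Finset α)) (x : α → ℝ) (i : α) : ℝ :=
  (hdeg E i : ℝ) * x i ^ (k - 1) + ∑ e ∈ E.filter (fun e => i ∈ e), ∏ j ∈ e.erase i, x j

/-- The action of the adjacency tensor: `(A x^{k-1})_i`. -/
def adjAct (E : Finset (Finset α)) (x : α → ℝ) (i : α) : ℝ :=
  ∑ e ∈ E.filter (fun e => i ∈ e), ∏ j ∈ e.erase i, x j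

/-- `lam` is an H-eigenvalue of the Laplacian tensor. -/
def IsLapEig (k : ℕ) (E : Finset (Finset α)) (lam : ℝ) : Prop :=
  ∃ x : α → ℝ, x ≠ 0 ∧ ∀ i, lapAct k E x i = lam * x i ^ (k - 1)

/-- `lam` is the largest H-eigenvalue of the Laplacian tensor. -/
def IsLargestLapEig (k : ℕ) (E : Finset (Finset α)) (lam : ℝ) : Prop :=
  IsLapEig k E lam ∧ ∀ mu : ℝ, IsLapEig k E mu → mu ≤ lam

/-- `lam` is an H-eigenvalue of the signless Laplacian tensor. -/
def IsSignEig (k : ℕ) (E : Finset (Finset α)) (lam : ℝ) : Prop :=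
  ∃ x : α → ℝ, x ≠ 0 ∧ ∀ i, signAct k E x i = lam * x i ^ (k - 1)

/-- `lam` is the largest H-eigenvalue of the signless Laplacian tensor. -/
def IsLargestSignEig (k : ℕ) (E : Finset (Finset α)) (lam : ℝ) : Prop :=
  IsSignEig k E lam ∧ ∀ mu : ℝ, IsSignEig k E mu → mu ≤ lam

/-- `lam` is an H-eigenvalue of the adjacency tensor. -/
def IsAdjEig (k : ℕ) (E : Finset (Finset α)) (lam : ℝ) : Prop :=
  ∃ x : α → ℝ, x ≠ 0 ∧ ∀ i, adjAct E x i = lam * x i ^ (k - 1)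

/-- `lam` is the largest H-eigenvalue of the adjacency tensor. -/
def IsLargestAdjEig (k : ℕ) (E : Finset (Finset α)) (lam : ℝ) : Prop :=
  IsAdjEig k E lam ∧ ∀ mu : ℝ, IsAdjEig k E mu → mu ≤ lam

/-- `G = (V, E)` is a `k`-uniform hyperstar of size `d`: there is a heart `h` and a
disjoint partition of the remaining vertices into `d` parts of size `k-1`, the edges
being the heart together with one part. -/
def IsHyperstar (k d : ℕ) (E : Finset (Finset α)) : Prop :=
  ∃ (h : α) (P : Fin d → Finset α),
    (∀ i, h ∉ P i) ∧
    (∀ i, (P i).card = k - 1) ∧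
    (∀ i j, i ≠ j → Disjoint (P i) (P j)) ∧
    (∀ v : α, v ≠ h → ∃ i, v ∈ P i) ∧
    E = Finset.image (fun i => insert h (P i)) Finset.univ

/-- The hypergraph is connected: any two distinct vertices are joined by a chain of
pairwise intersecting edges. -/
def IsConnectedH (E : Finset (Finset α)) : Prop :=
  ∀ i j : α, i ≠ j → Relation.TransGen (fun a b : α => ∃ e ∈ E, a ∈ e ∧ b ∈ e) i j

/-- For `k` even: the hypergraph is odd-bipartite. -/
def IsOddBipartite [Fintype α] (E : Finset (Finset α)) : Prop :=
  E = ∅ ∨ ∃ V₁ : Finset α, V₁ ≠ ∅ ∧ V₁ ≠ Finset.univ ∧ ∀ e ∈ E, Odd (e ∩ V₁).card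

/-- `G = (V, E)` is a `k`-uniform hypercycle of size `s`. -/
def IsHypercycle (k : ℕ) (s : ℕ) [NeZero s] (E : Finset (Finset α)) : Prop :=
  ∃ P : Fin s → Finset α,
    (∀ i, (P i).card = k) ∧
    (∀ v : α, ∃ i, v ∈ P i) ∧
    E = Finset.image P Finset.univ ∧
    (∀ i : Fin s, (P i ∩ P (i + 1)).card = 1) ∧
    (∀ i j : Fin s, i ≠ j → j ≠ i + 1 → i ≠ j + 1 → P i ∩ P j = ∅) ∧
    Function.Injective (fun i : Fin s => P i ∩ P (i + 1))

/-!
The largest H-eigenvalue of the Laplacian tensor of a `k`-uniform hypergraph, `k` even, is at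
least the maximum of the form `L x^k = ∑ₑ (∑_{i ∈ e} xᵢ^k - k ∏_{i ∈ e} xᵢ)` on the compact set
`∑ᵢ xᵢ^k = 1`: by Lagrange multipliers a maximiser is an H-eigenvector whose eigenvalue is the
maximum. Conversely an H-eigenvector `x` of `L` with eigenvalue `λ` has `L x^k = λ ∑ᵢ xᵢ^k`.
Since every edge term is nonnegative by AM-GM, extending `x` by zero to the larger vertex set
and adding edges can only increase the form, whence `λ(L) ≤ λ(L')`.
-/

section EvenPower

theorem Finset.card_mul_prod_le_sum_pow_card {ι : Type*} (s : Finset ι) (x : ι → ℝ)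
    (hs : Even s.card) : (s.card : ℝ) * ∏ i ∈ s, x i ≤ ∑ i ∈ s, x i ^ s.card := by
  rcases s.eq_empty_or_nonempty with rfl | hne
  · simp
  set k := s.card
  have hk : (k : ℝ) ≠ 0 := by simpa [k] using hne.card_ne_zero
  have amgm := Real.geom_mean_le_arith_mean_weighted s (fun _ => (k : ℝ)⁻¹)
    (fun i => |x i| ^ k) (fun _ _ => by positivity) (by simp [k, hk]) (fun _ _ => by positivity)
  have root : ∀ i ∈ s, (|x i| ^ k) ^ (k : ℝ)⁻¹ = |x i| := fun i _ =>
    Real.pow_rpow_inv_natCast (abs_nonneg _) (by exact_mod_cast hk)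
  rw [prod_congr rfl root, ← mul_sum] at amgm
  calc (k : ℝ) * ∏ i ∈ s, x i ≤ k * ∏ i ∈ s, |x i| := by
        gcongr (k : ℝ) * ?_
        exact (le_abs_self _).trans (abs_prod s x).le
    _ ≤ k * ((k : ℝ)⁻¹ * ∑ i ∈ s, |x i| ^ k) := by gcongr
    _ = ∑ i ∈ s, x i ^ k := by
        rw [← mul_assoc, mul_inv_cancel₀ hk, one_mul]
        exact sum_congr rfl fun i _ => hs.pow_abs (x i)

variable {ι : Type*} [Fintype ι] {k : ℕ}

theorem sum_even_pow_pos (hk : Even k) {x : ι → ℝ} (hx : x ≠ 0) : 0 < ∑ i, x i ^ k := by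
  obtain ⟨i, hi⟩ := Function.ne_iff.mp hx
  exact sum_pos' (fun j _ => hk.pow_nonneg _) ⟨i, mem_univ _, hk.pow_pos hi⟩

theorem isCompact_sum_even_pow_eq_one (hk : Even k) (hk0 : k ≠ 0) :
    IsCompact {x : ι → ℝ | ∑ i, x i ^ k = 1} := by
  refine Metric.isCompact_of_isClosed_isBounded
    (isClosed_eq (by fun_prop) continuous_const) ?_
  refine isBounded_iff_forall_norm_le.mpr ⟨1, fun x hx => ?_⟩
  refine (pi_norm_le_iff_of_nonneg zero_le_one).mpr fun i => ?_
  have hle : |x i| ^ k ≤ 1 := by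
    rw [hk.pow_abs, ← show ∑ j, x j ^ k = 1 from hx]
    exact single_le_sum (fun j _ => hk.pow_nonneg (x j)) (mem_univ i)
  exact (pow_le_one_iff_of_nonneg (abs_nonneg _) hk0).mp hle

theorem hasStrictFDerivAt_sum_pow (s : Finset ι) (k : ℕ) (x : ι → ℝ) :
    HasStrictFDerivAt (fun y : ι → ℝ => ∑ i ∈ s, y i ^ k)
      (∑ i ∈ s, ((k : ℝ) * x i ^ (k - 1)) • (ContinuousLinearMap.proj i : (ι → ℝ) →L[ℝ] ℝ)) x :=
  HasStrictFDerivAt.fun_sum fun i _ => by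
    simpa [Function.comp_def] using (hasStrictDerivAt_pow k (x i)).comp_hasStrictFDerivAt x
      (ContinuousLinearMap.proj (R := ℝ) (φ := fun _ : ι => ℝ) i).hasStrictFDerivAt

theorem Function.Injective.sum_pow_extend_zero {κ : Type*} [Fintype κ] {f : ι → κ}
    (hf : Function.Injective f) (hk : k ≠ 0) (x : ι → ℝ) :
    ∑ j, Function.extend f x 0 j ^ k = ∑ i, x i ^ k := by
  refine (Fintype.sum_of_injective f hf _ _ (fun j hj => ?_) fun i => by rw [hf.extend_apply]).symm
  rw [Function.extend_apply' _ _ _ (by simpa using hj), Pi.zero_apply, zero_pow hk]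

end EvenPower

section LapForm

variable {V : Type*} {k : ℕ}

/-- The form `L x^k`, expanded edge by edge. -/
def lapForm (k : ℕ) (E : Finset (Finset V)) (x : V → ℝ) : ℝ :=
  ∑ e ∈ E, (∑ i ∈ e, x i ^ k - k * ∏ i ∈ e, x i)

theorem lapForm_smul {E : Finset (Finset V)} (hunif : ∀ e ∈ E, e.card = k) (c : ℝ) (x : V → ℝ) :
    lapForm k E (c • x) = c ^ k * lapForm k E x := by
  simp only [lapForm, mul_sum]
  refine sum_congr rfl fun e he => ?_
  simp only [Pi.smul_apply, smul_eq_mul, mul_pow, prod_mul_distrib, prod_const, hunif e he,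
    mul_sub, mul_sum]
  ring

theorem lapForm_mono (hk : Even k) {E₁ E₂ : Finset (Finset V)} (hE : E₁ ⊆ E₂)
    (hunif : ∀ e ∈ E₂, e.card = k) (x : V → ℝ) : lapForm k E₁ x ≤ lapForm k E₂ x :=
  sum_le_sum_of_subset_of_nonneg hE fun e he _ => by
    have := e.card_mul_prod_le_sum_pow_card x (hunif e he ▸ hk)
    rw [hunif e he] at this
    linarith

theorem lapForm_image {W : Type*} [DecidableEq W] {f : V → W} (hf : Function.Injective f)
    (E : Finset (Finset V)) (y : W → ℝ) :
    lapForm k (E.image (image f)) y = lapForm k E (y ∘ f) := by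
  rw [lapForm, sum_image fun _ _ _ _ h => image_injective hf h]
  refine sum_congr rfl fun e _ => ?_
  rw [sum_image hf.injOn, prod_image hf.injOn]
  rfl

variable [Fintype V] [DecidableEq V]

theorem sum_mul_lapAct (k : ℕ) (E : Finset (Finset V)) (x v : V → ℝ) :
    ∑ i, v i * lapAct k E x i =
      ∑ e ∈ E, ∑ i ∈ e, v i * (x i ^ (k - 1) - ∏ j ∈ e.erase i, x j) := by
  have hlap : ∀ i, lapAct k E x i = ∑ e ∈ E with i ∈ e, (x i ^ (k - 1) - ∏ j ∈ e.erase i, x j) :=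
    fun i => by simp [lapAct, hdeg, sum_sub_distrib]
  simp_rw [hlap, mul_sum, sum_filter]
  rw [sum_comm]
  simp [sum_ite_mem]

theorem lapForm_eq_sum_mul_lapAct (hk : k ≠ 0) {E : Finset (Finset V)}
    (hunif : ∀ e ∈ E, e.card = k) (x : V → ℝ) :
    lapForm k E x = ∑ i, x i * lapAct k E x i := by
  rw [sum_mul_lapAct, lapForm]
  refine sum_congr rfl fun e he => ?_
  have hpow : ∀ i, x i * x i ^ (k - 1) = x i ^ k := fun i => by
    rw [← pow_succ', Nat.sub_add_cancel (Nat.pos_of_ne_zero hk)]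
  have hsplit : ∑ i ∈ e, x i * (x i ^ (k - 1) - ∏ j ∈ e.erase i, x j) =
      ∑ i ∈ e, x i ^ k - ∑ _i ∈ e, ∏ j ∈ e, x j := by
    rw [← sum_sub_distrib]
    exact sum_congr rfl fun i hi => by rw [mul_sub, hpow, mul_prod_erase e x hi]
  rw [hsplit, sum_const, hunif e he, nsmul_eq_mul]

theorem lapForm_eq_mul_sum_pow (hk : k ≠ 0) {E : Finset (Finset V)}
    (hunif : ∀ e ∈ E, e.card = k) {x : V → ℝ} {μ : ℝ}
    (hx : ∀ i, lapAct k E x i = μ * x i ^ (k - 1)) : lapForm k E x = μ * ∑ i, x i ^ k := by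
  rw [lapForm_eq_sum_mul_lapAct hk hunif, mul_sum]
  refine sum_congr rfl fun i _ => ?_
  rw [hx, mul_left_comm, ← pow_succ', Nat.sub_add_cancel (Nat.pos_of_ne_zero hk)]

theorem hasStrictFDerivAt_lapForm (E : Finset (Finset V)) (x : V → ℝ) :
    HasStrictFDerivAt (lapForm k E)
      (∑ i, ((k : ℝ) * lapAct k E x i) • (ContinuousLinearMap.proj i : (V → ℝ) →L[ℝ] ℝ)) x := by
  have hproj (i : V) := (ContinuousLinearMap.proj i : (V → ℝ) →L[ℝ] ℝ).hasStrictFDerivAt (x := x)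
  refine (HasStrictFDerivAt.fun_sum fun e _ =>
    (hasStrictFDerivAt_sum_pow e k x).sub
      ((HasStrictFDerivAt.finsetProd fun i _ => hproj i).const_mul _)).congr_fderiv ?_
  ext v
  simp only [_root_.sum_apply, sub_apply, smul_apply, ContinuousLinearMap.proj_apply,
    smul_eq_mul]
  calc _ = k * ∑ e ∈ E, ∑ i ∈ e, v i * (x i ^ (k - 1) - ∏ j ∈ e.erase i, x j) := by
        simp only [mul_sum, ← sum_sub_distrib]
        exact sum_congr rfl fun _ _ => sum_congr rfl fun _ _ => by ring
    _ = _ := by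
        rw [← sum_mul_lapAct, mul_sum]
        exact sum_congr rfl fun _ _ => by ring

end LapForm

section Spectral

variable {V : Type*} [Fintype V] {k : ℕ} {E : Finset (Finset V)}

theorem isLapEig_lapForm_of_isMaxOn [DecidableEq V] (hk : k ≠ 0)
    (hunif : ∀ e ∈ E, e.card = k) {x₀ : V → ℝ} (hx₀ : ∑ i, x₀ i ^ k = 1)
    (hmax : IsMaxOn (lapForm k E) {x | ∑ i, x i ^ k = 1} x₀) :
    IsLapEig k E (lapForm k E x₀) := by
  have hextr : IsLocalExtrOn (lapForm k E) {x | ∑ i, x i ^ k = ∑ i, x₀ i ^ k} x₀ := by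
    rw [hx₀]
    exact .inr hmax.localize
  obtain ⟨a, b, hab, hlagrange⟩ := hextr.exists_multipliers_of_hasStrictFDerivAt_1d
    (hasStrictFDerivAt_sum_pow univ k x₀) (hasStrictFDerivAt_lapForm E x₀)
  have hcoord (i : V) : a * x₀ i ^ (k - 1) + b * lapAct k E x₀ i = 0 := by
    have hk' : (k : ℝ) ≠ 0 := Nat.cast_ne_zero.mpr hk
    have hi := DFunLike.congr_fun hlagrange (Pi.single i 1)
    simp only [add_apply, smul_apply, _root_.sum_apply, ContinuousLinearMap.proj_apply,
      Pi.single_apply, smul_eq_mul, mul_ite, mul_one, mul_zero, sum_ite_eq', mem_univ,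
      ↓reduceIte, zero_apply] at hi
    apply mul_left_cancel₀ hk'
    linear_combination hi
  have hx₀0 : x₀ ≠ 0 := by
    rintro rfl
    simp [hk] at hx₀
  have hb : b ≠ 0 := by
    rintro rfl
    have ha : a ≠ 0 := by
      rintro rfl
      exact hab rfl
    refine hx₀0 (funext fun i => eq_zero_of_pow_eq_zero (n := k - 1) ?_)
    simpa [ha] using hcoord i
  have heig (i : V) : lapAct k E x₀ i = -a / b * x₀ i ^ (k - 1) := by
    field_simp
    linear_combination hcoord i
  have hform := lapForm_eq_mul_sum_pow hk hunif heig
  rw [hx₀, mul_one] at hform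
  exact ⟨x₀, hx₀0, hform ▸ heig⟩

theorem lapForm_le_mul_sum_pow_of_isMaxOn (hk : Even k) (hk0 : k ≠ 0)
    (hunif : ∀ e ∈ E, e.card = k) {x₀ : V → ℝ}
    (hmax : IsMaxOn (lapForm k E) {x | ∑ i, x i ^ k = 1} x₀) (y : V → ℝ) :
    lapForm k E y ≤ lapForm k E x₀ * ∑ i, y i ^ k := by
  rcases eq_or_ne y 0 with rfl | hy
  · have h0 : lapForm k E 0 = 0 := by simpa [hk0] using lapForm_smul hunif 0 (0 : V → ℝ)
    simp [h0, hk0]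
  have ht : 0 < ∑ i, y i ^ k := sum_even_pow_pos hk hy
  set c := ((∑ i, y i ^ k) ^ (k : ℝ)⁻¹)⁻¹
  have hc : c ^ k = (∑ i, y i ^ k)⁻¹ := by rw [inv_pow, Real.rpow_inv_natCast_pow ht.le hk0]
  have hcy : c • y ∈ {x | ∑ i, x i ^ k = 1} := by
    simp [mul_pow, ← mul_sum, hc, ht.ne']
  have hle := hmax hcy
  rw [Set.mem_ofPred_eq, lapForm_smul hunif, hc, inv_mul_le_iff₀ ht] at hle
  linarith

theorem exists_isLapEig_lapForm_le [DecidableEq V] [Nonempty V] (hk : Even k) (hk0 : k ≠ 0)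
    (hunif : ∀ e ∈ E, e.card = k) :
    ∃ μ, IsLapEig k E μ ∧ ∀ y, lapForm k E y ≤ μ * ∑ i, y i ^ k := by
  have hcont : Continuous (lapForm k E) := by
    unfold lapForm
    fun_prop
  have hne : {x : V → ℝ | ∑ i, x i ^ k = 1}.Nonempty :=
    ⟨Pi.single (Classical.arbitrary V) 1, by simp [Pi.single_apply, ite_pow, hk0]⟩
  obtain ⟨x₀, hx₀, hmax⟩ :=
    (isCompact_sum_even_pow_eq_one hk hk0).exists_isMaxOn hne hcont.continuousOn
  exact ⟨_, isLapEig_lapForm_of_isMaxOn hk0 hunif hx₀ hmax,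
    lapForm_le_mul_sum_pow_of_isMaxOn hk hk0 hunif hmax⟩

end Spectral

theorem largest_lap_eig_monotone_even_general {k n n' : ℕ} (hk : 3 ≤ k)
    (hkeven : Even k) (hnn : n ≤ n')
    (E : Finset (Finset (Fin n))) (E' : Finset (Finset (Fin n')))
    (hunif : ∀ e ∈ E, e.card = k) (hunif' : ∀ e ∈ E', e.card = k)
    (hsub : ∀ e ∈ E, e.image (Fin.castLE hnn) ∈ E')
    (lam lam' : ℝ) (hlam : IsLargestLapEig k E lam)
    (hlam' : IsLargestLapEig k E' lam') :
    lam ≤ lam' := by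
  have hk0 : k ≠ 0 := by omega
  obtain ⟨x, hx0, hx⟩ := hlam.1
  have hι : Function.Injective (Fin.castLE hnn) := Fin.castLE_injective hnn
  set y := Function.extend (Fin.castLE hnn) x 0
  obtain ⟨i₀, -⟩ := Function.ne_iff.mp hx0
  have : Nonempty (Fin n') := ⟨Fin.castLE hnn i₀⟩
  obtain ⟨μ, hμ, hμ_ge⟩ := exists_isLapEig_lapForm_le hkeven hk0 hunif'
  have hpos := sum_even_pow_pos hkeven hx0
  refine le_of_mul_le_mul_right ?_ hpos
  calc lam * ∑ i, x i ^ k = lapForm k E x := (lapForm_eq_mul_sum_pow hk0 hunif hx).symm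
    _ = lapForm k (E.image (image (Fin.castLE hnn))) y := by
        rw [lapForm_image hι, show y ∘ Fin.castLE hnn = x from Function.extend_comp hι x 0]
    _ ≤ lapForm k E' y := lapForm_mono hkeven (image_subset_iff.mpr hsub) hunif' y
    _ ≤ μ * ∑ j, y j ^ k := hμ_ge y
    _ ≤ lam' * ∑ i, x i ^ k := by
        rw [hι.sum_pow_extend_zero hk0]
        gcongr
        exact hlam'.2 μ hμ

/-- For `k` even and two `k`-uniform hypergraphs `G = (V, E)`,
`G' = (V', E')` with `V ⊆ V'` and `E ⊆ E'`, we have `λ(L) ≤ λ(L')`. -/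
theorem largest_lap_eig_monotone_even {k n n' : ℕ} (hk : 3 ≤ k) (hkn : k ≤ n)
    (hkeven : Even k) (hnn : n ≤ n')
    (E : Finset (Finset (Fin n))) (E' : Finset (Finset (Fin n')))
    (hunif : ∀ e ∈ E, e.card = k) (hunif' : ∀ e ∈ E', e.card = k)
    (hsub : ∀ e ∈ E, e.image (Fin.castLE hnn) ∈ E')
    (lam lam' : ℝ) (hlam : IsLargestLapEig k E lam)
    (hlam' : IsLargestLapEig k E' lam') :
    lam ≤ lam' :=
  largest_lap_eig_monotone_even_general hk hkeven hnn E E' hunif hunif' hsub lam lam' hlam hlam'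
end

section
/- Let G=(V,E) be a k-uniform connected hypergraph with maximum degree d>0 and signless Laplacian tensor Q. Let α* be the largest real root of the equation α^k+(1−d)α^{k−1}−d=0; then α* lies in the interval (d−1,d], and λ(Q) ≥ d + d·(1/α*)^{k−1}, with equality holding if and only if G is a hyperstar. -/
open Finset

variable {α : Type*} [DecidableEq α]

/-!
Write `f(t) = t^k + (1 - d) t^{k-1} - d = t^{k-1}(t + 1 - d) - d`; its largest root `a` satisfies
`d + d a^{1-k} = a + 1`.

The largest H-eigenvalue `λ` dominates `Q z^k / ∑ z_i^k` for every nonnegative `z`: the maximiser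
of this quotient over the simplex satisfies the Karush–Kuhn–Tucker conditions, which are exactly
the eigen-equations. Testing with the vector that is `a` at a vertex `i` of degree `d`, `1` on the
neighbourhood of `i` and `0` elsewhere gives `λ ≥ a + 1` up to the defect `∑_{v ~ i} (d_v - 1)`.
So equality forces every neighbour of `i` to have degree one, and connectivity then makes the
hypergraph a hyperstar with heart `i`.

Conversely, on a hyperstar the eigen-equations at the leaves of a branch multiply out to
`(μ - 1)^{k-1} ∏_branch x = x_heart^{k-1}` (when the product is nonzero), and the equation at the
heart then gives `(μ - d)(μ - 1)^{k-1} ≤ d`, i.e. `f(μ - 1) ≤ 0`, so `μ ≤ a + 1`.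
-/

open Function

def starPoly (k d : ℕ) (t : ℝ) : ℝ := t ^ k + (1 - d) * t ^ (k - 1) - d

namespace starPoly

variable {k d : ℕ} {t a : ℝ}

lemma eq_pow_mul_sub (hk : 1 ≤ k) (t : ℝ) : starPoly k d t = t ^ (k - 1) * (t + 1 - d) - d := by
  obtain ⟨m, rfl⟩ := Nat.exists_eq_add_of_le' hk
  simp only [starPoly, Nat.add_sub_cancel, pow_succ]
  ring

lemma pos_of_lt (hk : 2 ≤ k) (hd : 1 ≤ d) (ht : d < t) : 0 < starPoly k d t := by
  have hd1 : (1 : ℝ) ≤ d := by exact_mod_cast hd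
  have hpow : t ≤ t ^ (k - 1) := le_self_pow₀ (by linarith) (by omega)
  rw [eq_pow_mul_sub (by omega)]
  nlinarith

lemma le_of_nonpos (hk : 2 ≤ k) (hd : 1 ≤ d) (hmax : a ∈ upperBounds {b | starPoly k d b = 0})
    (ht : starPoly k d t ≤ 0) : t ≤ a := by
  have htd : t ≤ d := not_lt.1 fun h => (pos_of_lt hk hd h).not_ge ht
  have hcont : ContinuousOn (starPoly k d) (Set.Icc t (d + 1)) := by
    unfold starPoly; fun_prop
  obtain ⟨r, hr, hr0⟩ := intermediate_value_Icc (by linarith) hcont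
    ⟨ht, (pos_of_lt hk hd (lt_add_one _)).le⟩
  exact hr.1.trans (hmax hr0)

lemma sub_one_eq (hk : 1 ≤ k) : starPoly k d (d - 1) = -d := by
  rw [eq_pow_mul_sub hk]; ring

lemma mem_Ioc_of_isGreatest (hk : 2 ≤ k) (hd : 1 ≤ d)
    (ha : IsGreatest {b | starPoly k d b = 0} a) : a ∈ Set.Ioc ((d : ℝ) - 1) d := by
  have hd0 : (0 : ℝ) < d := by exact_mod_cast hd
  refine ⟨lt_of_le_of_ne (le_of_nonpos hk hd ha.2 ((sub_one_eq (by omega)).le.trans ?_)) ?_,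
    not_lt.1 fun h => (pos_of_lt hk hd h).ne' ha.1⟩
  · linarith
  · rintro rfl
    have : starPoly k d (d - 1) = 0 := ha.1
    rw [sub_one_eq (by omega)] at this
    linarith

lemma add_mul_one_div_pow_eq (hk : 1 ≤ k) (ha0 : 0 < a) (ha : starPoly k d a = 0) :
    (d : ℝ) + d * (1 / a) ^ (k - 1) = a + 1 := by
  rw [eq_pow_mul_sub hk, sub_eq_zero] at ha
  calc (d : ℝ) + d * (1 / a) ^ (k - 1) = d + a ^ (k - 1) * (a + 1 - d) / a ^ (k - 1) := by
        rw [ha, one_div_pow, mul_one_div]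
    _ = a + 1 := by field_simp; ring

end starPoly

lemma hasDerivAt_nonpos_of_isMaxOn_Ici {g : ℝ → ℝ} {g' s : ℝ} (hs : 0 ≤ s)
    (hmax : IsMaxOn g (Set.Ici 0) s) (hg : HasDerivAt g g' s) : g' ≤ 0 := by
  have hcone : (1 : ℝ) ∈ posTangentConeAt (Set.Ici 0) s :=
    mem_posTangentConeAt_of_segment_subset fun t ht => by
      rw [segment_eq_Icc (by linarith)] at ht
      exact hs.trans ht.1
  simpa using hmax.localize.hasFDerivWithinAt_nonpos hg.hasFDerivAt.hasFDerivWithinAt hcone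

lemma sum_pow_pos_of_mem_stdSimplex {ι : Type*} [Fintype ι] (k : ℕ) {x : ι → ℝ}
    (hx : x ∈ stdSimplex ℝ ι) : 0 < ∑ i, x i ^ k := by
  obtain ⟨i, -, hi⟩ := exists_ne_zero_of_sum_ne_zero (hx.2.trans_ne one_ne_zero)
  exact (pow_pos ((hx.1 i).lt_of_ne' hi) k).trans_le
    (single_le_sum (fun j _ => pow_nonneg (hx.1 j) k) (mem_univ i))

lemma pow_card_mul_prod_eq {ι M : Type*} [DecidableEq ι] [CommMonoidWithZero M]
    [IsCancelMulZero M] {s : Finset ι} {x : ι → M} {c y : M}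
    (h : ∀ v ∈ s, c * x v ^ s.card = y * ∏ u ∈ s.erase v, x u) (hp : ∏ v ∈ s, x v ≠ 0) :
    c ^ s.card * ∏ v ∈ s, x v = y ^ s.card := by
  set p := ∏ v ∈ s, x v
  have hprod : (∏ v ∈ s, ∏ u ∈ s.erase v, x u) * p = p ^ s.card := by
    rw [← prod_mul_distrib, prod_congr rfl fun v hv => prod_erase_mul s x hv, prod_const]
  have hall := prod_congr rfl h
  rw [prod_mul_distrib, prod_mul_distrib, prod_const, prod_const, prod_pow] at hall
  refine mul_right_cancel₀ (pow_ne_zero s.card hp) ?_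
  calc c ^ s.card * p * p ^ s.card = c ^ s.card * p ^ s.card * p := by rw [mul_right_comm]
    _ = y ^ s.card * p ^ s.card := by rw [hall, mul_assoc, hprod]

lemma IsConnectedH.mem_of_closed {β : Type*} {E : Finset (Finset β)} (hconn : IsConnectedH E)
    {S : Finset β} (hS : ∀ e ∈ E, ∀ b ∈ e, b ∈ S → e ⊆ S) {i : β} (hi : i ∈ S) (v : β) :
    v ∈ S := by
  rcases eq_or_ne v i with rfl | hvi
  · exact hi
  have hchain := hconn v i hvi
  clear hvi
  induction hchain with
  | single hrel =>
    obtain ⟨e, he, hv, hb⟩ := hrel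
    exact hS e he _ hb hi hv
  | tail _ hrel ih =>
    obtain ⟨e, he, hc, hb⟩ := hrel
    exact ih (hS e he _ hb hi hc)

lemma sum_prod_update {E : Finset (Finset α)} (x : α → ℝ) (i : α) (t : ℝ) :
    ∑ e ∈ E, ∏ j ∈ e, update x i t j = ∑ e ∈ E, ∏ j ∈ e, x j + (t - x i) * adjAct E x i := by
  have hedge : ∀ e ∈ E, ∏ j ∈ e, update x i t j
      = ∏ j ∈ e, x j + if i ∈ e then (t - x i) * ∏ j ∈ e.erase i, x j else 0 := by
    intro e _
    by_cases hi : i ∈ e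
    · rw [prod_update_of_mem hi, sdiff_singleton_eq_erase, ← mul_prod_erase e x hi, if_pos hi]
      ring
    · rw [prod_update_of_notMem hi, if_neg hi, add_zero]
  rw [sum_congr rfl hedge, sum_add_distrib, ← sum_filter, adjAct, mul_sum]

section SignForm

variable [Fintype α]

/-- The form `Q x^k = ∑ i, x i * (Q x^{k-1})_i` of the signless Laplacian tensor of a
`k`-uniform hypergraph. -/
def signForm (k : ℕ) (E : Finset (Finset α)) (x : α → ℝ) : ℝ :=
  ∑ i, (hdeg E i : ℝ) * x i ^ k + k * ∑ e ∈ E, ∏ j ∈ e, x j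

variable {k : ℕ} {E : Finset (Finset α)}

lemma continuous_signForm : Continuous (signForm k E) := by
  unfold signForm; fun_prop

lemma signForm_smul (hunif : ∀ e ∈ E, e.card = k) (c : ℝ) (x : α → ℝ) :
    signForm k E (c • x) = c ^ k * signForm k E x := by
  have hedge : ∀ e ∈ E, ∏ j ∈ e, (c • x) j = c ^ k * ∏ j ∈ e, x j := fun e he => by
    simp only [Pi.smul_apply, smul_eq_mul, prod_mul_distrib, prod_const, hunif e he]
  unfold signForm
  rw [sum_congr rfl hedge, ← mul_sum, mul_add]
  congr 1
  · rw [mul_sum]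
    exact sum_congr rfl fun i _ => by rw [Pi.smul_apply, smul_eq_mul, mul_pow]; ring
  · ring

lemma signForm_zero (hk : 1 ≤ k) (hunif : ∀ e ∈ E, e.card = k) : signForm k E 0 = 0 := by
  simpa [zero_pow (by omega : k ≠ 0)] using signForm_smul hunif 0 0

lemma signForm_update (x : α → ℝ) (i : α) (t : ℝ) :
    signForm k E (update x i t) = signForm k E x + hdeg E i * (t ^ k - x i ^ k)
      + k * (t - x i) * adjAct E x i := by
  have hdiag : ∀ j, (hdeg E j : ℝ) * update x i t j ^ k
      = update (fun j => (hdeg E j : ℝ) * x j ^ k) i (hdeg E i * t ^ k) j :=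
    fun j => apply_update (fun j s => (hdeg E j : ℝ) * s ^ k) x i t j
  simp only [signForm, hdiag, Finset.sum_update_of_mem (mem_univ i), sum_prod_update]
  rw [← add_sum_erase _ _ (mem_univ i), sdiff_singleton_eq_erase]
  ring

lemma sum_pow_update (x : α → ℝ) (i : α) (t : ℝ) :
    ∑ j, update x i t j ^ k = ∑ j, x j ^ k + (t ^ k - x i ^ k) := by
  have hpow : ∀ j, update x i t j ^ k = update (fun j => x j ^ k) i (t ^ k) j :=
    fun j => apply_update (fun _ s => s ^ k) x i t j
  simp only [hpow, Finset.sum_update_of_mem (mem_univ i)]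
  rw [← add_sum_erase _ _ (mem_univ i), sdiff_singleton_eq_erase]
  ring

lemma signAct_eq_of_forall_signForm_le (hk : 2 ≤ k) {y : α → ℝ} {μ : ℝ} (hy : ∀ i, 0 ≤ y i)
    (hle : ∀ z, (∀ i, 0 ≤ z i) → signForm k E z ≤ μ * ∑ i, z i ^ k)
    (heq : signForm k E y = μ * ∑ i, y i ^ k) (i : α) :
    signAct k E y i = μ * y i ^ (k - 1) := by
  set B := adjAct E y i
  set g : ℝ → ℝ := fun t => (hdeg E i - μ) * (t ^ k - y i ^ k) + k * (t - y i) * B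
  have hmax : IsMaxOn g (Set.Ici 0) (y i) := by
    intro t (ht : 0 ≤ t)
    have hz : ∀ j, 0 ≤ update y i t j := fun j => by
      rcases eq_or_ne j i with rfl | hj
      · simpa using ht
      · simpa [hj] using hy j
    have := hle _ hz
    rw [signForm_update, sum_pow_update] at this
    show g t ≤ g (y i)
    simp only [g, sub_self, mul_zero]
    linarith
  have hg : HasDerivAt g ((hdeg E i - μ) * (k * y i ^ (k - 1)) + k * 1 * B) (y i) :=
    (((hasDerivAt_pow k (y i)).sub_const _).const_mul _).add
      ((((hasDerivAt_id (y i)).sub_const _).const_mul _).mul_const _)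
  have hB : 0 ≤ B := sum_nonneg fun e _ => prod_nonneg fun j _ => hy j
  have hkpos : (0 : ℝ) < k := by positivity
  change hdeg E i * y i ^ (k - 1) + B = μ * y i ^ (k - 1)
  rcases (hy i).eq_or_lt with h0 | hpos
  · have := hasDerivAt_nonpos_of_isMaxOn_Ici (hy i) hmax hg
    rw [← h0, zero_pow (by omega)] at this ⊢
    nlinarith
  · have := (hmax.isLocalMax (Ici_mem_nhds hpos)).hasDerivAt_eq_zero hg
    have : k * (hdeg E i * y i ^ (k - 1) + B - μ * y i ^ (k - 1)) = 0 := by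
      linear_combination this
    linarith [(mul_eq_zero.1 this).resolve_left hkpos.ne']

lemma exists_isSignEig_forall_signForm_le [Nonempty α] (hk : 2 ≤ k)
    (hunif : ∀ e ∈ E, e.card = k) :
    ∃ μ, IsSignEig k E μ ∧ ∀ z, (∀ i, 0 ≤ z i) → signForm k E z ≤ μ * ∑ i, z i ^ k := by
  set S : (α → ℝ) → ℝ := fun x => ∑ i, x i ^ k
  have hS : ∀ x ∈ stdSimplex ℝ α, S x ≠ 0 := fun x hx =>
    (sum_pow_pos_of_mem_stdSimplex k hx).ne'
  have hcont : ContinuousOn (fun x => signForm k E x / S x) (stdSimplex ℝ α) :=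
    continuous_signForm.continuousOn.div (by fun_prop) hS
  obtain ⟨y, hy, hmax⟩ := (isCompact_stdSimplex ℝ α).exists_isMaxOn
    ⟨_, single_mem_stdSimplex ℝ (Classical.arbitrary α)⟩ hcont
  set μ := signForm k E y / S y
  have hle : ∀ z, (∀ i, 0 ≤ z i) → signForm k E z ≤ μ * S z := by
    intro z hz
    rcases eq_or_ne (∑ i, z i) 0 with h0 | h0
    · obtain rfl : z = 0 := funext ((sum_eq_zero_iff_of_nonneg fun i _ => hz i).1 h0 · (mem_univ _))
      simp [S, signForm_zero (by omega) hunif, zero_pow (by omega : k ≠ 0)]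
    · set c := (∑ i, z i)⁻¹
      have hc : c ≠ 0 := inv_ne_zero h0
      have hmem : c • z ∈ stdSimplex ℝ α :=
        ⟨fun i => mul_nonneg (inv_nonneg.2 (sum_nonneg fun j _ => hz j)) (hz i),
          by simp only [Pi.smul_apply, smul_eq_mul, ← mul_sum, c, inv_mul_cancel₀ h0]⟩
      have hScz : S (c • z) = c ^ k * S z := by simp [S, mul_pow, mul_sum]
      have := hmax hmem
      simp only [Set.mem_ofPred_eq, signForm_smul hunif, hScz,
        mul_div_mul_left _ _ (pow_ne_zero k hc)] at this
      have hSz : 0 < S z := (sum_nonneg fun i _ => pow_nonneg (hz i) k).lt_of_ne'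
        fun (h : S z = 0) => hS _ hmem (by rw [hScz, h, mul_zero])
      rwa [div_le_iff₀ hSz] at this
  have hy0 : y ≠ 0 := by
    rintro rfl
    simp [stdSimplex] at hy
  refine ⟨μ, ⟨y, hy0, signAct_eq_of_forall_signForm_le hk hy.1 hle ?_⟩, hle⟩
  exact (div_mul_cancel₀ _ (hS y hy)).symm

lemma signForm_le_of_isLargestSignEig [Nonempty α] (hk : 2 ≤ k) (hunif : ∀ e ∈ E, e.card = k)
    {lam : ℝ} (hlam : IsLargestSignEig k E lam) {z : α → ℝ} (hz : ∀ i, 0 ≤ z i) :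
    signForm k E z ≤ lam * ∑ i, z i ^ k := by
  obtain ⟨μ, hμ, hle⟩ := exists_isSignEig_forall_signForm_le hk hunif
  exact (hle z hz).trans
    (mul_le_mul_of_nonneg_right (hlam.2 μ hμ) (sum_nonneg fun i _ => pow_nonneg (hz i) k))

end SignForm

def hnbhd (E : Finset (Finset α)) (i : α) : Finset α :=
  (E.filter (fun e => i ∈ e)).biUnion (fun e => e.erase i)

section Neighbourhood

variable {k : ℕ} {E : Finset (Finset α)} {i v : α}

lemma mem_hnbhd : v ∈ hnbhd E i ↔ v ≠ i ∧ ∃ e ∈ E, i ∈ e ∧ v ∈ e := by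
  simp only [hnbhd, mem_biUnion, mem_filter, mem_erase]
  constructor
  · rintro ⟨e, ⟨he, hi⟩, hv, hve⟩
    exact ⟨hv, e, he, hi, hve⟩
  · rintro ⟨hv, e, he, hi, hve⟩
    exact ⟨e, ⟨he, hi⟩, hv, hve⟩

lemma self_notMem_hnbhd : i ∉ hnbhd E i := fun h => (mem_hnbhd.1 h).1 rfl

lemma one_le_hdeg_of_mem_hnbhd (hv : v ∈ hnbhd E i) : 1 ≤ hdeg E v := by
  obtain ⟨-, e, he, -, hve⟩ := mem_hnbhd.1 hv
  exact card_pos.2 ⟨e, mem_filter.2 ⟨he, hve⟩⟩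

lemma card_hnbhd_le (hunif : ∀ e ∈ E, e.card = k) (i : α) :
    (hnbhd E i).card ≤ hdeg E i * (k - 1) := by
  calc (hnbhd E i).card ≤ ∑ e ∈ E.filter (fun e => i ∈ e), (e.erase i).card := card_biUnion_le
    _ = ∑ e ∈ E.filter (fun e => i ∈ e), (k - 1) := sum_congr rfl fun e he => by
        rw [card_erase_of_mem (mem_filter.1 he).2, hunif e (mem_filter.1 he).1]
    _ = hdeg E i * (k - 1) := by rw [sum_const, smul_eq_mul, hdeg]

lemma subset_insert_hnbhd {e : Finset α} (he : e ∈ E) (hi : i ∈ e) :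
    e ⊆ insert i (hnbhd E i) := fun v hv =>
  (eq_or_ne v i).elim (fun h => h ▸ mem_insert_self _ _)
    fun h => mem_insert_of_mem (mem_hnbhd.2 ⟨h, e, he, hi, hv⟩)

end Neighbourhood

def starVec (E : Finset (Finset α)) (i : α) (a : ℝ) : α → ℝ :=
  fun j => if j = i then a else if j ∈ hnbhd E i then 1 else 0

section StarVec

variable {k : ℕ} {E : Finset (Finset α)} {i : α} {a : ℝ}

lemma starVec_self : starVec E i a i = a := if_pos rfl

lemma starVec_of_mem_hnbhd {v : α} (hv : v ∈ hnbhd E i) : starVec E i a v = 1 := by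
  rw [starVec, if_neg (mem_hnbhd.1 hv).1, if_pos hv]

lemma starVec_nonneg (ha : 0 ≤ a) (j : α) : 0 ≤ starVec E i a j := by
  unfold starVec; split_ifs <;> norm_num [ha]

variable [Fintype α]

lemma sum_starVec_pow (hk : 1 ≤ k) :
    ∑ j, starVec E i a j ^ k = a ^ k + (hnbhd E i).card := by
  rw [← sum_subset (subset_univ (insert i (hnbhd E i))), sum_insert self_notMem_hnbhd,
    starVec_self, sum_congr rfl fun v hv => by rw [starVec_of_mem_hnbhd hv, one_pow],
    sum_const, nsmul_one]
  intro j _ hj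
  rw [mem_insert, not_or] at hj
  rw [starVec, if_neg hj.1, if_neg hj.2, zero_pow (by omega)]

lemma le_signForm_starVec (ha : 0 ≤ a) :
    hdeg E i * a ^ k + ∑ v ∈ hnbhd E i, (hdeg E v : ℝ) + k * (hdeg E i * a)
      ≤ signForm k E (starVec E i a) := by
  have hx := starVec_nonneg (E := E) (i := i) ha
  have hdiag : hdeg E i * a ^ k + ∑ v ∈ hnbhd E i, (hdeg E v : ℝ)
      ≤ ∑ j, (hdeg E j : ℝ) * starVec E i a j ^ k := by
    refine le_of_eq_of_le ?_ (sum_le_univ_sum_of_nonneg (s := insert i (hnbhd E i))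
      fun j => mul_nonneg (Nat.cast_nonneg _) (pow_nonneg (hx j) k))
    rw [sum_insert self_notMem_hnbhd, starVec_self]
    exact congrArg _ (sum_congr rfl fun v hv => by rw [starVec_of_mem_hnbhd hv, one_pow, mul_one])
  have hstar : ∀ e ∈ E.filter (fun e => i ∈ e), ∏ j ∈ e, starVec E i a j = a := by
    intro e he
    obtain ⟨he, hi⟩ := mem_filter.1 he
    rw [← mul_prod_erase e _ hi, starVec_self, prod_eq_one fun v hv => starVec_of_mem_hnbhd
      (mem_hnbhd.2 ⟨ne_of_mem_erase hv, e, he, hi, mem_of_mem_erase hv⟩), mul_one]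
  have hedges : hdeg E i * a ≤ ∑ e ∈ E, ∏ j ∈ e, starVec E i a j := by
    refine le_of_eq_of_le ?_ (sum_le_sum_of_subset_of_nonneg (filter_subset (fun e => i ∈ e) E)
      fun e _ _ => prod_nonneg fun j _ => hx j)
    rw [sum_congr rfl hstar, sum_const, nsmul_eq_mul, hdeg]
  unfold signForm
  gcongr

lemma add_one_mul_add_le_signForm_starVec (hk : 1 ≤ k) (hunif : ∀ e ∈ E, e.card = k)
    (ha0 : 0 < a) (ha : starPoly k (hdeg E i) a = 0) :
    (a + 1) * ∑ j, starVec E i a j ^ k + ∑ v ∈ hnbhd E i, ((hdeg E v : ℝ) - 1)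
      ≤ signForm k E (starVec E i a) := by
  have hN : ((hnbhd E i).card : ℝ) ≤ hdeg E i * ((k : ℝ) - 1) := by
    rw [← Nat.cast_one, ← Nat.cast_sub hk, ← Nat.cast_mul]
    exact_mod_cast card_hnbhd_le hunif i
  have hroot : a ^ k * (a + 1) = a * hdeg E i + hdeg E i * a ^ k := by
    rw [starPoly.eq_pow_mul_sub hk, sub_eq_zero] at ha
    obtain ⟨m, rfl⟩ := Nat.exists_eq_add_of_le' hk
    rw [Nat.add_sub_cancel] at ha
    linear_combination a * ha
  rw [sum_starVec_pow hk, sum_sub_distrib, sum_const, nsmul_one]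
  nlinarith [le_signForm_starVec (k := k) (E := E) (i := i) ha0.le,
    mul_le_mul_of_nonneg_left hN ha0.le]

end StarVec

section Hyperstar

variable {k : ℕ} {E : Finset (Finset α)}

lemma isHyperstar_of_forall_mem {h : α} (hmem : ∀ e ∈ E, h ∈ e) (hcard : ∀ e ∈ E, e.card = k)
    (hdisj : ∀ e ∈ E, ∀ e' ∈ E, e ≠ e' → Disjoint (e.erase h) (e'.erase h))
    (hcover : ∀ v, v ≠ h → ∃ e ∈ E, v ∈ e) : IsHyperstar k E.card E := by
  refine ⟨h, fun j => (E.equivFin.symm j : Finset α).erase h, fun j => notMem_erase _ _,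
    fun j => ?_, fun j j' hjj' => ?_, fun v hv => ?_, ?_⟩
  · rw [card_erase_of_mem (hmem _ (coe_mem _)), hcard _ (coe_mem _)]
  · exact hdisj _ (coe_mem _) _ (coe_mem _) fun h =>
      hjj' (E.equivFin.symm.injective (Subtype.ext h))
  · obtain ⟨e, he, hve⟩ := hcover v hv
    exact ⟨E.equivFin ⟨e, he⟩, by simpa using mem_erase.2 ⟨hv, hve⟩⟩
  · ext e
    simp only [mem_image, mem_univ, true_and]
    constructor
    · intro he
      exact ⟨E.equivFin ⟨e, he⟩, by simp [insert_erase (hmem e he)]⟩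
    · rintro ⟨j, rfl⟩
      rw [insert_erase (hmem _ (coe_mem _))]
      exact coe_mem _

lemma eq_of_hdeg_eq_one {v : α} (h1 : hdeg E v = 1) {e e' : Finset α} (he : e ∈ E) (hv : v ∈ e)
    (he' : e' ∈ E) (hv' : v ∈ e') : e = e' :=
  card_le_one.1 h1.le e (mem_filter.2 ⟨he, hv⟩) e' (mem_filter.2 ⟨he', hv'⟩)

lemma isHyperstar_of_forall_hdeg_hnbhd_eq_one (hk : 1 ≤ k) (hunif : ∀ e ∈ E, e.card = k)
    (hconn : IsConnectedH E) {i : α} (h1 : ∀ v ∈ hnbhd E i, hdeg E v = 1) :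
    IsHyperstar k (hdeg E i) E := by
  have hcenter : ∀ e ∈ E, ∀ b ∈ e, b ∈ insert i (hnbhd E i) → i ∈ e := by
    intro e he b hb hbS
    rcases mem_insert.1 hbS with rfl | hbN
    · exact hb
    · obtain ⟨-, e₀, he₀, hi, hb₀⟩ := mem_hnbhd.1 hbN
      exact eq_of_hdeg_eq_one (h1 b hbN) he₀ hb₀ he hb ▸ hi
  have hall := hconn.mem_of_closed
    (fun e he b hb hbS => subset_insert_hnbhd he (hcenter e he b hb hbS)) (mem_insert_self i _)
  have hmem : ∀ e ∈ E, i ∈ e := fun e he => by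
    obtain ⟨b, hb⟩ := card_pos.1 (hunif e he ▸ hk)
    exact hcenter e he b hb (hall b)
  rw [hdeg, filter_true_of_mem hmem]
  refine isHyperstar_of_forall_mem hmem hunif (fun e he e' he' hne => ?_) fun v hv => ?_
  · refine disjoint_left.2 fun v hv hv' => hne ?_
    have hvN : v ∈ hnbhd E i :=
      mem_hnbhd.2 ⟨ne_of_mem_erase hv, e, he, hmem e he, mem_of_mem_erase hv⟩
    exact eq_of_hdeg_eq_one (h1 v hvN) he (mem_of_mem_erase hv) he' (mem_of_mem_erase hv')
  · obtain ⟨-, e, he, -, hve⟩ := mem_hnbhd.1 ((mem_insert.1 (hall v)).resolve_left hv)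
    exact ⟨e, he, hve⟩

end Hyperstar

section HyperstarEigenvalue

variable {k d : ℕ} {E : Finset (Finset α)} {h : α} {P : Fin d → Finset α}

lemma filter_mem_eq_singleton_of_mem_branch (hdisj : ∀ j j', j ≠ j' → Disjoint (P j) (P j'))
    (hPh : ∀ j, h ∉ P j) (hE : E = image (fun j => insert h (P j)) univ) {j : Fin d} {v : α}
    (hv : v ∈ P j) : E.filter (fun e => v ∈ e) = {insert h (P j)} := by
  have hvh : v ≠ h := fun hvh => hPh j (hvh ▸ hv)
  ext e
  simp only [hE, mem_filter, mem_image, mem_univ, true_and, mem_singleton]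
  constructor
  · rintro ⟨⟨j', rfl⟩, hv'⟩
    have hv' : v ∈ P j' := (mem_insert.1 hv').resolve_left hvh
    by_contra hne
    exact disjoint_left.1 (hdisj j j' fun hjj' => hne (hjj' ▸ rfl)) hv hv'
  · rintro rfl
    exact ⟨⟨j, rfl⟩, mem_insert_of_mem hv⟩

lemma signAct_branch (hdisj : ∀ j j', j ≠ j' → Disjoint (P j) (P j')) (hPh : ∀ j, h ∉ P j)
    (hE : E = image (fun j => insert h (P j)) univ) {j : Fin d} {v : α} (hv : v ∈ P j)
    (x : α → ℝ) :
    signAct k E x v = x v ^ (k - 1) + x h * ∏ u ∈ (P j).erase v, x u := by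
  have hvh : v ≠ h := fun hvh => hPh j (hvh ▸ hv)
  rw [signAct, hdeg, filter_mem_eq_singleton_of_mem_branch hdisj hPh hE hv, card_singleton,
    sum_singleton, erase_insert_of_ne hvh.symm,
    prod_insert fun hmem => hPh j (mem_of_mem_erase hmem), Nat.cast_one, one_mul]

lemma signAct_heart (hdisj : ∀ j j', j ≠ j' → Disjoint (P j) (P j')) (hPh : ∀ j, h ∉ P j)
    (hne : ∀ j, (P j).Nonempty) (hE : E = image (fun j => insert h (P j)) univ) (x : α → ℝ) :
    signAct k E x h = d * x h ^ (k - 1) + ∑ j, ∏ u ∈ P j, x u := by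
  have hinj : Function.Injective fun j => insert h (P j) := by
    intro j j' hjj'
    have hP : P j = P j' := by
      rw [← erase_insert (hPh j), ← erase_insert (hPh j')]
      exact congrArg (·.erase h) hjj'
    by_contra hne'
    exact (hne j).ne_empty (disjoint_self.1 (hP ▸ hdisj j j' hne'))
  have hfilter : E.filter (fun e => h ∈ e) = E :=
    filter_true_of_mem fun e he => by
      obtain ⟨j, -, rfl⟩ := mem_image.1 (hE ▸ he)
      exact mem_insert_self h _
  rw [signAct, hdeg, hfilter, hE, card_image_of_injective _ hinj, card_univ, Fintype.card_fin,
    sum_image fun j _ j' _ hjj' => hinj hjj']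
  simp only [erase_insert (hPh _)]

lemma IsHyperstar.sub_mul_pow_le (hk : 2 ≤ k) (hstar : IsHyperstar k d E) {μ : ℝ}
    (hμ : IsSignEig k E μ) (hμ1 : μ ≠ 1) : (μ - d) * (μ - 1) ^ (k - 1) ≤ d := by
  obtain ⟨h, P, hPh, hcard, hdisj, hcover, hE⟩ := hstar
  obtain ⟨x, hx0, heig⟩ := hμ
  have hleaf : ∀ j, ∀ v ∈ P j, (μ - 1) * x v ^ (k - 1) = x h * ∏ u ∈ (P j).erase v, x u := by
    intro j v hv
    have := heig v
    rw [signAct_branch hdisj hPh hE hv] at this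
    linarith
  have hxh : x h ≠ 0 := by
    refine fun h0 => hx0 (funext fun v => ?_)
    rcases eq_or_ne v h with rfl | hv
    · exact h0
    obtain ⟨j, hvj⟩ := hcover v hv
    have := hleaf j v hvj
    rw [h0, zero_mul] at this
    exact (pow_eq_zero_iff (by omega)).1 ((mul_eq_zero.1 this).resolve_left (sub_ne_zero.2 hμ1))
  have hbranch : ∀ j, (μ - 1) ^ (k - 1) * ∏ u ∈ P j, x u
      = if ∏ u ∈ P j, x u = 0 then 0 else x h ^ (k - 1) := by
    intro j
    split_ifs with hp
    · rw [hp, mul_zero]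
    · have := pow_card_mul_prod_eq (fun v hv => by rw [hcard j]; exact hleaf j v hv) hp
      rwa [hcard j] at this
  have hheart := heig h
  rw [signAct_heart hdisj hPh (fun j => card_pos.1 (by rw [hcard j]; omega)) hE] at hheart
  set T := (univ.filter fun j => ¬∏ u ∈ P j, x u = 0).card
  have hT : (μ - d) * (μ - 1) ^ (k - 1) * x h ^ (k - 1) = T * x h ^ (k - 1) := by
    calc (μ - d) * (μ - 1) ^ (k - 1) * x h ^ (k - 1)
        = ∑ j, (μ - 1) ^ (k - 1) * ∏ u ∈ P j, x u := by
          rw [← mul_sum]; linear_combination -(μ - 1) ^ (k - 1) * hheart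
      _ = T * x h ^ (k - 1) := by
          rw [sum_congr rfl fun j _ => hbranch j, sum_ite, sum_const_zero, zero_add, sum_const,
            nsmul_eq_mul]
  rw [mul_right_cancel₀ (pow_ne_zero _ hxh) hT]
  exact_mod_cast (card_filter_le _ _).trans (card_univ.trans (Fintype.card_fin d)).le

lemma IsHyperstar.le_of_isSignEig (hk : 2 ≤ k) (hd : 1 ≤ d) (hstar : IsHyperstar k d E)
    {μ a : ℝ} (hμ : IsSignEig k E μ) (hda : (d : ℝ) - 1 < a)
    (hmax : a ∈ upperBounds {b | starPoly k d b = 0}) : μ ≤ a + 1 := by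
  have hd1 : (1 : ℝ) ≤ d := by exact_mod_cast hd
  rcases le_or_gt μ d with hμd | hμd
  · linarith
  have hle := hstar.sub_mul_pow_le hk hμ (by linarith)
  have : starPoly k d (μ - 1) ≤ 0 := by
    rw [starPoly.eq_pow_mul_sub (by omega)]
    linarith
  linarith [starPoly.le_of_nonpos hk hd hmax this]

end HyperstarEigenvalue

theorem largest_sign_eig_lower_bound_general {n k d : ℕ} (hk : 3 ≤ k)
    (E : Finset (Finset (Fin n))) (hunif : ∀ e ∈ E, e.card = k)
    (hconn : IsConnectedH E)
    (hdmax : ∃ i, hdeg E i = d) (hd : 0 < d)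
    (lam : ℝ) (hlam : IsLargestSignEig k E lam)
    (a : ℝ) (ha : a ^ k + (1 - (d : ℝ)) * a ^ (k - 1) - (d : ℝ) = 0)
    (hamax : ∀ b : ℝ, b ^ k + (1 - (d : ℝ)) * b ^ (k - 1) - (d : ℝ) = 0 → b ≤ a) :
    a ∈ Set.Ioc ((d : ℝ) - 1) (d : ℝ) ∧
    (d : ℝ) + (d : ℝ) * (1 / a) ^ (k - 1) ≤ lam ∧
    (lam = (d : ℝ) + (d : ℝ) * (1 / a) ^ (k - 1) ↔ IsHyperstar k d E) := by
  obtain ⟨i, rfl⟩ := hdmax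
  have hroot : IsGreatest {b | starPoly k (hdeg E i) b = 0} a := ⟨ha, fun b hb => hamax b hb⟩
  have hIoc := starPoly.mem_Ioc_of_isGreatest (by omega) hd hroot
  have ha0 : 0 < a := by linarith [hIoc.1, (by exact_mod_cast hd : (1 : ℝ) ≤ hdeg E i)]
  rw [starPoly.add_mul_one_div_pow_eq (by omega) ha0 ha]
  have : Nonempty (Fin n) := ⟨i⟩
  have hS : 0 < ∑ j, starVec E i a j ^ k := by rw [sum_starVec_pow (by omega)]; positivity
  have hdefect : ∀ v ∈ hnbhd E i, 0 ≤ (hdeg E v : ℝ) - 1 := fun v hv =>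
    sub_nonneg.2 (by exact_mod_cast one_le_hdeg_of_mem_hnbhd hv)
  have hsandwich := (add_one_mul_add_le_signForm_starVec (by omega) hunif ha0 ha).trans
    (signForm_le_of_isLargestSignEig (by omega) hunif hlam (starVec_nonneg ha0.le))
  have hge : a + 1 ≤ lam := le_of_mul_le_mul_right (by linarith [sum_nonneg hdefect]) hS
  refine ⟨hIoc, hge, fun heq => ?_, fun hstar =>
    le_antisymm (hstar.le_of_isSignEig (by omega) hd hlam.1 hIoc.1 hroot.2) hge⟩
  refine isHyperstar_of_forall_hdeg_hnbhd_eq_one (by omega) hunif hconn fun v hv => ?_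
  have hzero := (sum_eq_zero_iff_of_nonneg hdefect).1
    (le_antisymm (by rw [heq] at hsandwich; linarith) (sum_nonneg hdefect)) v hv
  exact_mod_cast sub_eq_zero.1 hzero

/-- For a `k`-uniform connected hypergraph with maximum degree `d > 0` and
signless Laplacian tensor `Q`, if `a` is the largest real root of
`α^k + (1-d)·α^(k-1) - d = 0`, then `a ∈ (d-1, d]`, and
`λ(Q) ≥ d + d·(1/a)^(k-1)`, with equality iff `G` is a hyperstar. -/
theorem largest_sign_eig_lower_bound {n k d : ℕ} (hk : 3 ≤ k) (hkn : k ≤ n)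
    (E : Finset (Finset (Fin n))) (hunif : ∀ e ∈ E, e.card = k)
    (hconn : IsConnectedH E)
    (hdle : ∀ i, hdeg E i ≤ d) (hdmax : ∃ i, hdeg E i = d) (hd : 0 < d)
    (lam : ℝ) (hlam : IsLargestSignEig k E lam)
    (a : ℝ) (ha : a ^ k + (1 - (d : ℝ)) * a ^ (k - 1) - (d : ℝ) = 0)
    (hamax : ∀ b : ℝ, b ^ k + (1 - (d : ℝ)) * b ^ (k - 1) - (d : ℝ) = 0 → b ≤ a) :
    a ∈ Set.Ioc ((d : ℝ) - 1) (d : ℝ) ∧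
    (d : ℝ) + (d : ℝ) * (1 / a) ^ (k - 1) ≤ lam ∧
    (lam = (d : ℝ) + (d : ℝ) * (1 / a) ^ (k - 1) ↔ IsHyperstar k d E) :=
  largest_sign_eig_lower_bound_general hk E hunif hconn hdmax hd lam hlam a ha hamax
end

section
/- Let G=(V,E) be the 3-uniform complete hypergraph on n vertices with Laplacian tensor L, where n=2m for some positive integer m (and n≥3). Then λ(L) ≥ C(n−1,2)+m−1, which is strictly larger than the maximum degree d = C(n−1,2) of G. -/
open Finset

variable {α : Type*} [DecidableEq α]

/-! The balanced sign vector `x = (1, -1, 1, -1, …)` satisfies `∑ⱼ xⱼ = 0` and `xⱼ² = 1`. At a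
vertex `i` of the complete `3`-uniform hypergraph the Laplacian sums `xⱼ xₖ` over all pairs
`{j, k}` avoiding `i`, which is `((∑_{j ≠ i} xⱼ)² - ∑_{j ≠ i} xⱼ²) / 2 = (1 - (n - 1)) / 2`.
Hence `x` is an H-eigenvector with eigenvalue `C(n-1, 2) + n/2 - 1`, and `λ(L)` is at least
this. -/

theorem two_mul_sum_powersetCard_two_prod {R : Type*} [CommRing R] (t : Finset α)
    (x : α → R) :
    2 * ∑ s ∈ t.powersetCard 2, ∏ j ∈ s, x j = (∑ j ∈ t, x j) ^ 2 - ∑ j ∈ t, x j ^ 2 := by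
  induction t using Finset.induction_on with
  | empty => rw [powersetCard_eq_empty.2 (by simp)]; simp
  | insert a t ha ih =>
    have hdisj : Disjoint (t.powersetCard 2) ((t.powersetCard 1).image (insert a)) := by
      simp only [disjoint_left, mem_image, mem_powersetCard, not_exists, not_and]
      rintro _ ⟨hs, -⟩ u - rfl
      exact ha (hs (mem_insert_self a u))
    have hinsert : ∑ s ∈ (t.powersetCard 1).image (insert a), ∏ j ∈ s, x j
        = x a * ∑ j ∈ t, x j := by
      rw [powersetCard_one, map_eq_image, image_image, sum_image, mul_sum]
      · refine sum_congr rfl fun j hj => ?_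
        have hja : j ≠ a := fun h => ha (h ▸ hj)
        simp [prod_pair hja.symm]
      · intro j hj k hk hjk
        have hja : j ≠ a := fun h => ha (h ▸ hj)
        have hka : k ≠ a := fun h => ha (h ▸ hk)
        simpa [Finset.ext_iff, hja, hka] using congrArg (j ∈ ·) hjk
    rw [powersetCard_succ_insert ha, sum_union hdisj, hinsert, sum_insert ha, sum_insert ha]
    linear_combination ih

theorem sum_filter_mem_powersetCard_succ {β : Type*} [AddCommMonoid β] {s : Finset α}
    {i : α} (hi : i ∈ s) (k : ℕ) (f : Finset α → β) :
    ∑ e ∈ (s.powersetCard (k + 1)).filter (fun e => i ∈ e), f (e.erase i)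
      = ∑ t ∈ (s.erase i).powersetCard k, f t := by
  refine sum_nbij' (fun e => e.erase i) (insert i) ?_ ?_ ?_ ?_ (fun _ _ => rfl)
  · intro e he
    simp only [mem_filter, mem_powersetCard] at he ⊢
    exact ⟨erase_subset_erase i he.1.1, by rw [card_erase_of_mem he.2, he.1.2]; rfl⟩
  · intro t ht
    simp only [mem_filter, mem_powersetCard] at ht ⊢
    have hit : i ∉ t := fun h => (mem_erase.1 (ht.1 h)).1 rfl
    exact ⟨⟨insert_subset hi (ht.1.trans (erase_subset i s)),
      by rw [card_insert_of_notMem hit, ht.2]⟩, mem_insert_self i t⟩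
  · intro e he
    exact insert_erase (mem_filter.1 he).2
  · intro t ht
    exact erase_insert fun h => (mem_erase.1 ((mem_powersetCard.1 ht).1 h)).1 rfl

section Complete

variable [Fintype α]

theorem hdeg_powersetCard_univ (k : ℕ) (i : α) :
    hdeg (univ.powersetCard (k + 1)) i = (Fintype.card α - 1).choose k := by
  rw [hdeg, card_eq_sum_ones,
    sum_filter_mem_powersetCard_succ (mem_univ i) k (fun _ => 1), ← card_eq_sum_ones,
    card_powersetCard, card_erase_of_mem (mem_univ i), card_univ]

theorem isLapEig_powersetCard_three_univ [Nonempty α] {x : α → ℝ} (hsum : ∑ j, x j = 0)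
    (hsq : ∀ j, x j ^ 2 = 1) :
    IsLapEig 3 (univ.powersetCard 3 : Finset (Finset α))
      ((Fintype.card α - 1).choose 2 + (Fintype.card α : ℝ) / 2 - 1) := by
  refine ⟨x, fun hx => by simpa [hx] using hsq (Classical.arbitrary α), fun i => ?_⟩
  have hpairs := two_mul_sum_powersetCard_two_prod (univ.erase i) x
  rw [sum_erase_eq_sub (mem_univ i), hsum, zero_sub, neg_sq, sum_erase_eq_sub (mem_univ i),
    sum_congr rfl fun j _ => hsq j, sum_const, card_univ, nsmul_one] at hpairs
  rw [lapAct, hdeg_powersetCard_univ 2 i,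
    sum_filter_mem_powersetCard_succ (mem_univ i) 2 (fun t => ∏ j ∈ t, x j)]
  norm_num only [hsq i] at hpairs ⊢
  linarith

end Complete

theorem sum_neg_one_pow_fin_two_mul {R : Type*} [Ring R] (m : ℕ) :
    ∑ j : Fin (2 * m), (-1 : R) ^ (j : ℕ) = 0 := by
  rw [Fin.sum_univ_eq_sum_range (fun j => (-1 : R) ^ j), neg_one_geom_sum,
    if_pos (even_two_mul m)]

theorem largest_lap_eig_complete_three_general {n m : ℕ} (hn : n = 2 * m)
    (hn3 : 3 ≤ n) (E : Finset (Finset (Fin n)))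
    (hE : E = Finset.univ.powersetCard 3)
    (lam : ℝ) (hlam : IsLargestLapEig 3 E lam) :
    (∀ i, hdeg E i = (n - 1).choose 2) ∧
    ((n - 1).choose 2 : ℝ) + (m : ℝ) - 1 ≤ lam ∧
    ((n - 1).choose 2 : ℝ) < ((n - 1).choose 2 : ℝ) + (m : ℝ) - 1 := by
  subst hE hn
  have hm : 2 ≤ m := by omega
  have : Nonempty (Fin (2 * m)) := ⟨⟨0, by omega⟩⟩
  have heig := isLapEig_powersetCard_three_univ (sum_neg_one_pow_fin_two_mul m)
    fun j => by rw [pow_right_comm, neg_one_sq, one_pow]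
  rw [Fintype.card_fin, Nat.cast_mul, Nat.cast_ofNat, mul_div_cancel_left₀ _ two_ne_zero]
    at heig
  refine ⟨fun i => by simpa using hdeg_powersetCard_univ 2 i, hlam.2 _ heig, ?_⟩
  have hm_real : (2 : ℝ) ≤ m := by exact_mod_cast hm
  linarith

/-- For the `3`-uniform complete hypergraph on `n = 2m` vertices (`m ≥ 1`,
`n ≥ 3`) with Laplacian tensor `L`, the maximum degree is `d = C(n-1, 2)` and
`λ(L) ≥ C(n-1, 2) + m - 1 > C(n-1, 2)`. -/
theorem largest_lap_eig_complete_three {n m : ℕ} (hm : 0 < m) (hn : n = 2 * m)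
    (hn3 : 3 ≤ n) (E : Finset (Finset (Fin n)))
    (hE : E = Finset.univ.powersetCard 3)
    (lam : ℝ) (hlam : IsLargestLapEig 3 E lam) :
    (∀ i, hdeg E i = (n - 1).choose 2) ∧
    ((n - 1).choose 2 : ℝ) + (m : ℝ) - 1 ≤ lam ∧
    ((n - 1).choose 2 : ℝ) < ((n - 1).choose 2 : ℝ) + (m : ℝ) - 1 :=
  largest_lap_eig_complete_three_general hn hn3 E hE lam hlam
end
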